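/- arXiv:hep-th/9208072 — 8 statements merged into one kernel-verified Lean document; each statement's English description precedes it below -/
import Mathlib

section
/- With d_l^{(p)} and b_l^{(p)} defined by d_{2m}^{(p)} = -m, d_{2m+1}^{(p)} = -(p+m), b_{2m}^{(p)} = -m(p+m-1), b_{2m+1}^{(p)} = -m(p+m), and with β_{k,l}^{(n)} defined by the explicit binomial-quotient formulas (β_{2k,2l}^{(n)} = C(n-k,l)C(k+l-1,l)/C(2k+l-1,l), β_{2k,2l+1}^{(n)} = C(n-k,l)C(k+l,l+1)/C(2k+l,l+1), β_{2k+1,2l}^{(n)} = C(n-k,l)C(k+l,l)/C(2k+l,l), β_{2k+1,2l+1}^{(n)} = C(n-k,l+1)C(k+l,l)/C(2k+l+1,l+1)), the recursion relation (a) holds: β_{k,l+1}^{(n)}·d_{l+1}^{(k)} + (-1)^{k+l}·β_{k,l}^{(n)}·d_{2n+1-k-l}^{(-n)} = 0 for all 0 ≤ l ≤ 2n-k. -/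
/-- `d_l^{(p)}`: `d_{2m} = -m`, `d_{2m+1} = -(p+m)`. -/
def dCoeff (p : ℤ) (l : ℕ) : ℤ :=
  if l % 2 = 0 then -((l / 2 : ℕ) : ℤ) else -(p + ((l / 2 : ℕ) : ℤ))

/-- `b_l^{(p)}`: `b_{2m} = -m(p+m-1)`, `b_{2m+1} = -m(p+m)`. -/
def bCoeff (p : ℤ) (l : ℕ) : ℤ :=
  if l % 2 = 0 then -((l / 2 : ℕ) : ℤ) * (p + ((l / 2 : ℕ) : ℤ) - 1)
  else -((l / 2 : ℕ) : ℤ) * (p + ((l / 2 : ℕ) : ℤ))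

/-- `β_{k,l}^{(n)}` defined piecewise by the parities of `k` and `l`. -/
def betaCoeff (n k l : ℕ) : ℚ :=
  if k % 2 = 0 then
    let a := k / 2
    if l % 2 = 0 then
      let c := l / 2
      ((n - a).choose c * (a + c - 1).choose c : ℚ) / ((2 * a + c - 1).choose c : ℚ)
    else
      let c := l / 2
      ((n - a).choose c * (a + c).choose (c + 1) : ℚ) / ((2 * a + c).choose (c + 1) : ℚ)
  else
    let a := k / 2
    if l % 2 = 0 then
      let c := l / 2
      ((n - a).choose c * (a + c).choose c : ℚ) / ((2 * a + c).choose c : ℚ)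
    else
      let c := l / 2
      ((n - a).choose (c + 1) * (a + c).choose c : ℚ) / ((2 * a + c + 1).choose (c + 1) : ℚ)

lemma my_beta_ee (n a c : ℕ) :
    betaCoeff n (2*a) (2*c) =
      ((n - a).choose c * (a + c - 1).choose c : ℚ) / ((2 * a + c - 1).choose c : ℚ) := by
  unfold betaCoeff
  have h1 : 2*a % 2 = 0 := by omega
  have h2 : 2*a/2 = a := by omega
  have h3 : 2*c % 2 = 0 := by omega
  have h4 : 2*c/2 = c := by omega
  simp [h1, h2, h3, h4]

lemma my_beta_eo (n a c : ℕ) :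
    betaCoeff n (2*a) (2*c+1) =
      ((n - a).choose c * (a + c).choose (c + 1) : ℚ) / ((2 * a + c).choose (c + 1) : ℚ) := by
  unfold betaCoeff
  have h1 : 2*a % 2 = 0 := by omega
  have h2 : 2*a/2 = a := by omega
  have h3 : (2*c+1) % 2 = 1 := by omega
  have h4 : (2*c+1)/2 = c := by omega
  simp [h1, h2, h3, h4]

lemma my_beta_oe (n a c : ℕ) :
    betaCoeff n (2*a+1) (2*c) =
      ((n - a).choose c * (a + c).choose c : ℚ) / ((2 * a + c).choose c : ℚ) := by
  unfold betaCoeff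
  have h1 : (2*a+1) % 2 = 1 := by omega
  have h2 : (2*a+1)/2 = a := by omega
  have h3 : 2*c % 2 = 0 := by omega
  have h4 : 2*c/2 = c := by omega
  simp [h1, h2, h3, h4]

lemma my_beta_oo (n a c : ℕ) :
    betaCoeff n (2*a+1) (2*c+1) =
      ((n - a).choose (c + 1) * (a + c).choose c : ℚ) / ((2 * a + c + 1).choose (c + 1) : ℚ) := by
  unfold betaCoeff
  have h1 : (2*a+1) % 2 = 1 := by omega
  have h2 : (2*a+1)/2 = a := by omega
  have h3 : (2*c+1) % 2 = 1 := by omega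
  have h4 : (2*c+1)/2 = c := by omega
  simp [h1, h2, h3, h4]

lemma my_d_e (p : ℤ) (m : ℕ) : dCoeff p (2*m) = -(m : ℤ) := by
  unfold dCoeff
  have h1 : 2*m % 2 = 0 := by omega
  have h2 : 2*m/2 = m := by omega
  simp [h1, h2]

lemma my_d_o (p : ℤ) (m : ℕ) : dCoeff p (2*m+1) = -(p + (m : ℤ)) := by
  unfold dCoeff
  have h1 : (2*m+1) % 2 = 1 := by omega
  have h2 : (2*m+1)/2 = m := by omega
  simp [h1, h2]

lemma my_div_helper (X Y D1 D2 p q s : ℚ) (h1 : D1 ≠ 0) (h2 : D2 ≠ 0)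
    (h : X * p * D2 + s * Y * q * D1 = 0) :
    X / D1 * p + s * (Y / D2) * q = 0 := by
  have e : X / D1 * p + s * (Y / D2) * q = (X * p * D2 + s * Y * q * D1) / (D1 * D2) := by
    field_simp
  rw [e, h, zero_div]

lemma my_key_ee (b c : ℕ) :
    (b+c+1).choose (c+1) * (2*b+c+2) * (2*b+c+1).choose c
      = (b+c).choose c * (b+c+1) * (2*b+c+2).choose (c+1) := by
  have h1 : (b+c+1) * (b+c).choose c = (b+c+1).choose (c+1) * (c+1) :=
    Nat.add_one_mul_choose_eq (b+c) c
  have h2 : (2*b+c+2) * (2*b+c+1).choose c = (2*b+c+2).choose (c+1) * (c+1) :=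
    Nat.add_one_mul_choose_eq (2*b+c+1) c
  calc (b+c+1).choose (c+1) * (2*b+c+2) * (2*b+c+1).choose c
      = (b+c+1).choose (c+1) * ((2*b+c+2) * (2*b+c+1).choose c) := by ring
    _ = (b+c+1).choose (c+1) * ((2*b+c+2).choose (c+1) * (c+1)) := by rw [h2]
    _ = (b+c+1) * (b+c).choose c * (2*b+c+2).choose (c+1) := by rw [h1]; ring
    _ = (b+c).choose c * (b+c+1) * (2*b+c+2).choose (c+1) := by ring

lemma my_key_oe (N a c : ℕ) :
    N.choose (c+1) * (2*a+c+1) * (2*a+c).choose c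
      = N.choose c * (N - c) * (2*a+c+1).choose (c+1) := by
  have h1 : N.choose (c+1) * (c+1) = N.choose c * (N - c) :=
    Nat.choose_succ_right_eq N c
  have h2 : (2*a+c+1) * (2*a+c).choose c = (2*a+c+1).choose (c+1) * (c+1) :=
    Nat.add_one_mul_choose_eq (2*a+c) c
  calc N.choose (c+1) * (2*a+c+1) * (2*a+c).choose c
      = N.choose (c+1) * ((2*a+c+1) * (2*a+c).choose c) := by ring
    _ = N.choose (c+1) * ((2*a+c+1).choose (c+1) * (c+1)) := by rw [h2]
    _ = (N.choose (c+1) * (c+1)) * (2*a+c+1).choose (c+1) := by ring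
    _ = N.choose c * (N - c) * (2*a+c+1).choose (c+1) := by rw [h1]

/-- Recursion relation (a):
β_{k,l+1}^{(n)}·d_{l+1}^{(k)} + (-1)^{k+l}·β_{k,l}^{(n)}·d_{2n+1-k-l}^{(-n)} = 0
for 0 ≤ l ≤ 2n-k. -/
theorem beta_recursion_a (n k : ℕ) (hk1 : 1 ≤ k) (hk2 : k ≤ 2 * n + 1) :
    ∀ l : ℕ, l ≤ 2 * n - k →
      betaCoeff n k (l + 1) * (dCoeff (k : ℤ) (l + 1) : ℚ) +
        (-1 : ℚ) ^ (k + l) * betaCoeff n k l * (dCoeff (-(n : ℤ)) (2 * n + 1 - k - l) : ℚ)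
      = 0 := by
  intro l hl
  by_cases hktop : k = 2 * n + 1
  · have hl0 : l = 0 := by omega
    subst hl0; subst hktop
    have h3 : 2*n+1 - (2*n+1) - 0 = 0 := by omega
    have hb : betaCoeff n (2*n+1) 1 = 0 := by
      have := my_beta_oo n n 0
      simpa using this
    have hd : dCoeff (-(n:ℤ)) 0 = 0 := by simp [dCoeff]
    rw [h3, hb, hd]
    simp
  · have hkle : k ≤ 2 * n := by omega
    have hkl : k + l ≤ 2 * n := by omega
    rcases Nat.even_or_odd k with ⟨a, ha⟩ | ⟨a, ha⟩
    · -- k even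
      have hka : k = 2 * a := by omega
      have ha1 : 1 ≤ a := by omega
      obtain ⟨b, rfl⟩ : ∃ b, a = b + 1 := ⟨a - 1, by omega⟩
      subst hka
      rcases Nat.even_or_odd l with ⟨c, hc⟩ | ⟨c, hc⟩
      · -- l even : l = 2c
        have hlc : l = 2 * c := by omega
        subst hlc
        have hac : b + 1 + c ≤ n := by omega
        have hidx : 2 * n + 1 - 2 * (b+1) - 2 * c = 2 * (n - (b+1) - c) + 1 := by omega
        rw [hidx]
        rw [show 2*c+1 = 2*c+1 from rfl]
        rw [my_beta_eo, my_beta_ee, my_d_o, my_d_o]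
        have hsgn : (-1 : ℚ) ^ (2*(b+1) + 2*c) = 1 := by
          rw [show 2*(b+1)+2*c = 2*(b+1+c) by ring, pow_mul]; norm_num
        rw [hsgn]
        have hd2 : (-(-(n:ℤ) + ((n - (b+1) - c : ℕ) : ℤ))) = (b+1+c : ℤ) := by omega
        rw [hd2]
        rw [show (b+1) + c - 1 = b + c from by omega,
            show 2*(b+1) + c - 1 = 2*b+c+1 from by omega,
            show (b+1) + c = b+c+1 from by omega,
            show 2*(b+1) + c = 2*b+c+2 from by omega]
        have hD1 : ((2*b+c+2).choose (c+1) : ℚ) ≠ 0 := by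
          exact_mod_cast (Nat.choose_pos (by omega)).ne'
        have hD2 : ((2*b+c+1).choose c : ℚ) ≠ 0 := by
          exact_mod_cast (Nat.choose_pos (by omega)).ne'
        have keyQ : ((b+c+1).choose (c+1) * (2*b+c+2) * (2*b+c+1).choose c : ℚ)
            = ((b+c).choose c * (b+c+1) * (2*b+c+2).choose (c+1) : ℚ) := by
          exact_mod_cast my_key_ee b c
        refine my_div_helper _ _ _ _ _ _ _ hD1 hD2 ?_
        push_cast
        push_cast at keyQ
        linear_combination (-((n - (b+1)).choose c : ℚ)) * keyQ
      · -- l odd : l = 2c+1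
        have hlc : l = 2 * c + 1 := by omega
        subst hlc
        have hac : b + 1 + c + 1 ≤ n := by omega
        have hidx : 2 * n + 1 - 2 * (b+1) - (2 * c + 1) = 2 * (n - (b+1) - c) := by omega
        rw [hidx]
        rw [show 2*c+1+1 = 2*(c+1) from by ring]
        rw [my_beta_ee, my_beta_eo, my_d_e, my_d_e]
        have hsgn : (-1 : ℚ) ^ (2*(b+1) + (2*c+1)) = -1 := by
          rw [show 2*(b+1)+(2*c+1) = 2*(b+1+c)+1 by ring, pow_succ, pow_mul]; norm_num
        rw [hsgn]
        rw [show (b+1) + (c+1) - 1 = b+c+1 from by omega,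
            show 2*(b+1) + (c+1) - 1 = 2*b+c+2 from by omega,
            show (b+1) + c = b+c+1 from by omega,
            show 2*(b+1) + c = 2*b+c+2 from by omega]
        have hM : ((n - (b+1) - c : ℕ) : ℚ) = ((n - (b+1)) - c : ℕ) := by norm_cast
        have hD1 : ((2*b+c+2).choose (c+1) : ℚ) ≠ 0 := by
          exact_mod_cast (Nat.choose_pos (by omega)).ne'
        have keyQ : ((n-(b+1)).choose (c+1) * (c+1) : ℚ)
            = ((n-(b+1)).choose c * ((n-(b+1)) - c : ℕ) : ℚ) := by
          exact_mod_cast Nat.choose_succ_right_eq (n-(b+1)) c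
        refine my_div_helper _ _ _ _ _ _ _ hD1 hD1 ?_
        push_cast
        push_cast at keyQ
        linear_combination (-(((b+c+1).choose (c+1) : ℚ) * ((2*b+c+2).choose (c+1) : ℚ))) * keyQ
    · -- k odd
      have hka : k = 2 * a + 1 := by omega
      subst hka
      rcases Nat.even_or_odd l with ⟨c, hc⟩ | ⟨c, hc⟩
      · -- l even : l = 2c
        have hlc : l = 2 * c := by omega
        subst hlc
        have hac : a + c + 1 ≤ n := by omega
        have hidx : 2 * n + 1 - (2 * a + 1) - 2 * c = 2 * (n - a - c) := by omega
        rw [hidx]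
        rw [my_beta_oo, my_beta_oe, my_d_o, my_d_e]
        have hsgn : (-1 : ℚ) ^ (2*a+1 + 2*c) = -1 := by
          rw [show 2*a+1+2*c = 2*(a+c)+1 by ring, pow_succ, pow_mul]; norm_num
        rw [hsgn]
        have hD1 : ((2*a+c+1).choose (c+1) : ℚ) ≠ 0 := by
          exact_mod_cast (Nat.choose_pos (by omega)).ne'
        have hD2 : ((2*a+c).choose c : ℚ) ≠ 0 := by
          exact_mod_cast (Nat.choose_pos (by omega)).ne'
        have keyQ : ((n-a).choose (c+1) * (2*a+c+1) * (2*a+c).choose c : ℚ)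
            = ((n-a).choose c * ((n-a) - c : ℕ) * (2*a+c+1).choose (c+1) : ℚ) := by
          exact_mod_cast my_key_oe (n-a) a c
        refine my_div_helper _ _ _ _ _ _ _ hD1 hD2 ?_
        push_cast
        push_cast at keyQ
        linear_combination (-((a+c).choose c : ℚ)) * keyQ
      · -- l odd : l = 2c+1
        have hlc : l = 2 * c + 1 := by omega
        subst hlc
        have hac : a + c + 1 ≤ n := by omega
        have hidx : 2 * n + 1 - (2 * a + 1) - (2 * c + 1) = 2 * (n - a - c - 1) + 1 := by omega
        rw [hidx]
        rw [show 2*c+1+1 = 2*(c+1) from by ring]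
        rw [my_beta_oe, my_beta_oo, my_d_e, my_d_o]
        have hsgn : (-1 : ℚ) ^ (2*a+1 + (2*c+1)) = 1 := by
          rw [show 2*a+1+(2*c+1) = 2*(a+c+1) by ring, pow_mul]; norm_num
        rw [hsgn]
        have hd2 : (-(-(n:ℤ) + ((n - a - c - 1 : ℕ) : ℤ))) = (a+c+1 : ℤ) := by omega
        rw [hd2]
        rw [show a + (c+1) = a+c+1 from by omega,
            show 2*a + (c+1) = 2*a+c+1 from by omega]
        have hD1 : ((2*a+c+1).choose (c+1) : ℚ) ≠ 0 := by
          exact_mod_cast (Nat.choose_pos (by omega)).ne'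
        have keyQ : ((a+c+1) * (a+c).choose c : ℚ) = ((a+c+1).choose (c+1) * (c+1) : ℚ) := by
          exact_mod_cast Nat.add_one_mul_choose_eq (a+c) c
        refine my_div_helper _ _ _ _ _ _ _ hD1 hD1 ?_
        push_cast
        push_cast at keyQ
        linear_combination (((n-a).choose (c+1) : ℚ) * ((2*a+c+1).choose (c+1) : ℚ)) * keyQ
end

section
/- The coefficients β_{2k,2l}^{(n-1)} and β_{2k,2l-1}^{(n-1)} satisfy the component-projection identity β_{2k,2l}^{(n-1)} + β_{2k,2l-1}^{(n-1)} = α_{k,l}^{(n)} for 0 ≤ l ≤ n-k-1 (interpreting β_{2k,-1}^{(n-1)} = 0 for l = 0), where α_{k,l}^{(n)} = C(k+l-1,l)·C(n-k,l)/C(2k+l-1,l). -/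
/-! Both `β`-coefficients carry the same factor `C(k+l-1,l)/C(2k+l-1,l)`, so their sum is that
factor times `C(n-1-k,l) + C(n-1-k,l-1)`, which is `C(n-k,l)` by Pascal's rule; for `l ≥ 1`
the bound on `l` gives `k < n`, so `(n-1-k)+1 = n-k` despite truncated subtraction. -/

theorem betaCoeff_even_even (n a c : ℕ) :
    betaCoeff n (2 * a) (2 * c) =
      ((n - a).choose c * (a + c - 1).choose c : ℚ) / ((2 * a + c - 1).choose c : ℚ) := by
  simp [betaCoeff]

theorem betaCoeff_even_odd (n a c : ℕ) :
    betaCoeff n (2 * a) (2 * c + 1) =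
      ((n - a).choose c * (a + c).choose (c + 1) : ℚ) / ((2 * a + c).choose (c + 1) : ℚ) := by
  simp [betaCoeff, Nat.add_mod, Nat.add_div]

theorem betaCoeff_even_succ_add_even_odd {n a : ℕ} (c : ℕ) (h : a ≤ n) :
    betaCoeff n (2 * a) (2 * (c + 1)) + betaCoeff n (2 * a) (2 * c + 1) =
      ((a + c).choose (c + 1) * (n + 1 - a).choose (c + 1) : ℚ) /
        ((2 * a + c).choose (c + 1) : ℚ) := by
  have pascal : ((n - a).choose (c + 1) + (n - a).choose c : ℚ) = (n + 1 - a).choose (c + 1) := by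
    rw [Nat.sub_add_comm h, Nat.choose_succ_succ']
    push_cast
    ring
  rw [betaCoeff_even_even, betaCoeff_even_odd, ← pascal, show a + (c + 1) - 1 = a + c by omega,
    show 2 * a + (c + 1) - 1 = 2 * a + c by omega]
  ring

theorem betaCoeff_projection_general (n k : ℕ) :
    ∀ l : ℕ, l ≤ n - k - 1 →
      betaCoeff (n - 1) (2 * k) (2 * l) +
        (if l = 0 then 0 else betaCoeff (n - 1) (2 * k) (2 * l - 1)) =
      ((k + l - 1).choose l * (n - k).choose l : ℚ) / ((2 * k + l - 1).choose l : ℚ) := by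
  rintro (_ | m) hm
  · simpa using betaCoeff_even_even (n - 1) k 0
  · have hkn : k ≤ n - 1 := by omega
    rw [if_neg m.succ_ne_zero, show 2 * (m + 1) - 1 = 2 * m + 1 by omega,
      betaCoeff_even_succ_add_even_odd m hkn, show n - 1 + 1 - k = n - k by omega,
      show k + (m + 1) - 1 = k + m by omega, show 2 * k + (m + 1) - 1 = 2 * k + m by omega]

/-- Component-projection identity:
β_{2k,2l}^{(n-1)} + β_{2k,2l-1}^{(n-1)} = α_{k,l}^{(n)} for 0 ≤ l ≤ n-k-1
(with β_{2k,-1}^{(n-1)} interpreted as 0 for l = 0), where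
α_{k,l}^{(n)} = C(k+l-1,l)·C(n-k,l)/C(2k+l-1,l). -/
theorem betaCoeff_projection (n k : ℕ) (hn : 1 ≤ n) (hk1 : 1 ≤ k) (hk2 : k ≤ n) :
    ∀ l : ℕ, l ≤ n - k - 1 →
      betaCoeff (n - 1) (2 * k) (2 * l) +
        (if l = 0 then 0 else betaCoeff (n - 1) (2 * k) (2 * l - 1)) =
      ((k + l - 1).choose l * (n - k).choose l : ℚ) / ((2 * k + l - 1).choose l : ℚ) :=
  betaCoeff_projection_general n k
end

section
/- Let J_- be the (2n+1)×(2n+1) matrix with (J_-)_{i+1,i} = 1 for 1 ≤ i ≤ 2n and all other entries zero, let H be the diagonal matrix with diagonal entries (n, n-1, ..., 1, 0, -1, ..., -n), and let J_+ be the matrix whose only nonzero entries are the superdiagonal entries (n, -1, n-1, -2, n-2, -3, ..., -n), i.e. (J_+)_{2j-1,2j} = n-j+1 and (J_+)_{2j,2j+1} = -j for 1 ≤ j ≤ n. Then [H, J_-] = -J_-, [H, J_+] = J_+, and J_+J_- + J_-J_+ = H. -/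
open Matrix

variable (n : ℕ)

/-- `J₋`: the (2n+1)×(2n+1) matrix with 1's on the subdiagonal. -/
def Jminus : Matrix (Fin (2 * n + 1)) (Fin (2 * n + 1)) ℚ :=
  fun i j => if (i : ℕ) = (j : ℕ) + 1 then 1 else 0

/-- `H`: the diagonal matrix with diagonal entries n, n-1, ..., 0, ..., -n. -/
def Hmat : Matrix (Fin (2 * n + 1)) (Fin (2 * n + 1)) ℚ :=
  fun i j => if i = j then (n : ℚ) - (i : ℕ) else 0

/-- `J₊`: the matrix with superdiagonal entries n, -1, n-1, -2, ..., -n;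
in 1-based indexing, (J₊)_{2j-1,2j} = n-j+1 and (J₊)_{2j,2j+1} = -j. -/
def Jplus : Matrix (Fin (2 * n + 1)) (Fin (2 * n + 1)) ℚ :=
  fun i j => if (j : ℕ) = (i : ℕ) + 1 then
    (if (i : ℕ) % 2 = 0 then (n : ℚ) - ((i : ℕ) / 2 : ℕ) else -((((i : ℕ) + 1) / 2 : ℕ) : ℚ))
  else 0

/-- `M₁`: the matrix with superdiagonal entries n, 1, n-1, 2, ..., n;
in 1-based indexing, (M₁)_{2j-1,2j} = n-j+1 and (M₁)_{2j,2j+1} = j. -/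
def Mone : Matrix (Fin (2 * n + 1)) (Fin (2 * n + 1)) ℚ :=
  fun i j => if (j : ℕ) = (i : ℕ) + 1 then
    (if (i : ℕ) % 2 = 0 then (n : ℚ) - ((i : ℕ) / 2 : ℕ) else ((((i : ℕ) + 1) / 2 : ℕ) : ℚ))
  else 0


lemma sum_if (N : ℕ) (f : Fin N → ℚ) (m : ℕ) :
    ∑ k : Fin N, (if (k:ℕ) = m then f k else 0) =
    if h : m < N then f ⟨m, h⟩ else 0 := by
  split_ifs with h
  · have : ∀ k : Fin N, ((k:ℕ) = m) = (k = ⟨m, h⟩) := by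
      intro k; simp [Fin.ext_iff]
    simp_rw [this]; simp
  · exact Finset.sum_eq_zero fun k _ => by rw [if_neg]; omega

lemma sum_if2 (N : ℕ) (f : Fin N → ℚ) (m : ℕ) :
    ∑ k : Fin N, (if m = (k:ℕ)+1 then f k else 0) =
    if h : m - 1 < N ∧ 1 ≤ m then f ⟨m-1, h.1⟩ else 0 := by
  split_ifs with h
  · have : ∀ k : Fin N, (m = (k:ℕ)+1) = (k = ⟨m-1, h.1⟩) := by
      intro k; simp only [Fin.ext_iff, eq_iff_iff]; omega
    simp_rw [this]; simp
  · exact Finset.sum_eq_zero fun k _ => by rw [if_neg]; omega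


lemma Hmul (A : Matrix (Fin (2*n+1)) (Fin (2*n+1)) ℚ) (i j : Fin (2*n+1)) :
    (Hmat n * A) i j = ((n : ℚ) - (i:ℕ)) * A i j := by
  rw [Matrix.mul_apply]
  simp [Hmat, ite_mul, Finset.sum_ite_eq]

lemma mulH (A : Matrix (Fin (2*n+1)) (Fin (2*n+1)) ℚ) (i j : Fin (2*n+1)) :
    (A * Hmat n) i j = A i j * ((n : ℚ) - (j:ℕ)) := by
  rw [Matrix.mul_apply]
  simp [Hmat, mul_ite, Finset.sum_ite_eq']


private theorem rel1' : Hmat n * Jminus n - Jminus n * Hmat n = -Jminus n := by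
  ext i j
  simp only [Matrix.sub_apply, Matrix.neg_apply, Hmul, mulH, Jminus]
  split_ifs with h
  · have hi : (i:ℕ) = (j:ℕ)+1 := h
    push_cast [hi]; ring
  · ring

private theorem rel2' : Hmat n * Jplus n - Jplus n * Hmat n = Jplus n := by
  ext i j
  simp only [Matrix.sub_apply, Hmul, mulH, Jplus]
  split_ifs with h h2
  · have hj : (j:ℕ) = (i:ℕ)+1 := h
    push_cast [hj]; ring
  · have hj : (j:ℕ) = (i:ℕ)+1 := h
    push_cast [hj]; ring
  · ring

private theorem rel3' (hn : 1 ≤ n) : Jplus n * Jminus n + Jminus n * Jplus n = Hmat n := by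
  ext i j
  rw [Matrix.add_apply, Matrix.mul_apply, Matrix.mul_apply]
  have e1 : ∀ k, Jplus n i k * Jminus n k j =
      if (k:ℕ) = (i:ℕ)+1 then
        (if (i:ℕ) % 2 = 0 then (n : ℚ) - ((i:ℕ)/2 : ℕ) else -((((i:ℕ)+1)/2 : ℕ) : ℚ)) *
          Jminus n k j else 0 := by
    intro k; simp only [Jplus, ite_mul, zero_mul]
  have e2 : ∀ k, Jminus n i k * Jplus n k j =
      if (i:ℕ) = (k:ℕ)+1 then Jplus n k j else 0 := by
    intro k; simp only [Jminus, ite_mul, one_mul, zero_mul]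
  simp_rw [e1, e2, sum_if, sum_if2]
  simp only [Jminus, Jplus, Hmat, Fin.ext_iff]
  have hi := i.isLt; have hj := j.isLt
  rcases Nat.even_or_odd (i:ℕ) with ⟨k, hk⟩ | ⟨k, hk⟩
  · have d1 : (i:ℕ)/2 = k := by omega
    have d2 : ((i:ℕ)-1+1)/2 = k := by omega
    split_ifs <;> try (exfalso; omega)
    all_goals try simp only [d1, d2, mul_zero, zero_mul, mul_one, zero_add, add_zero, neg_zero]
    all_goals try push_cast [hk]
    all_goals first
      | ring1
      | (have hk0 : k = 0 := (by omega); subst hk0; try push_cast; ring1)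
      | (have hkn : k = n := (by omega); subst hkn; try push_cast; ring1)
  · have d1 : ((i:ℕ)+1)/2 = k + 1 := by omega
    have d2 : ((i:ℕ)-1)/2 = k := by omega
    split_ifs <;> try (exfalso; omega)
    all_goals try simp only [d1, d2, mul_zero, zero_mul, mul_one, zero_add, add_zero, neg_zero]
    all_goals try push_cast [hk]
    all_goals first
      | ring1
      | (have hk0 : k = 0 := (by omega); subst hk0; try push_cast; ring1)
      | (have hkn : k = n := (by omega); subst hkn; try push_cast; ring1)

/-- The osp(1|2) superprincipal-embedding relations:
[H, J₋] = -J₋, [H, J₊] = J₊, and {J₊, J₋} = H. -/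
theorem osp12_relations (n : ℕ) (hn : 1 ≤ n) :
    Hmat n * Jminus n - Jminus n * Hmat n = -Jminus n ∧
    Hmat n * Jplus n - Jplus n * Hmat n = Jplus n ∧
    Jplus n * Jminus n + Jminus n * Jplus n = Hmat n := by
  exact ⟨rel1' n, rel2' n, rel3' n hn⟩
end

section
/- With H, J_± the (2n+1)×(2n+1) matrices realizing the superprincipal osp(1|2) embedding (H = diag(n,...,-n); J_- the subdiagonal of 1's; J_+ the superdiagonal with entries n, -1, n-1, -2, ..., -n), set X_± = J_±². Then [H, X_±] = ±2X_±, [X_+, X_-] = -H, [J_-, X_+] = J_+, and [J_+, X_-] = -J_-. -/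
open Matrix

variable (n : ℕ)

/-!
All matrices involved are supported on a single diagonal: `H` on the main one, `J₋` on the
subdiagonal, and `J₊` on the superdiagonal with coefficients `a i`. A product of two such band
matrices is again one, with the coefficients multiplied, as long as the intermediate index stays
inside the matrix. Extending `a` to `ℤ` by `a (2t) = n - t`, `a (2t+1) = -(t+1)` makes it vanish at
`-1` and `2n`, which kills exactly the terms where the intermediate index leaves the matrix. Each
relation then reduces to the two identities `a (i - 2) = a i + 1` and `a i + a (i + 1) = n - i - 1`,
while `H` acts on the `k`-th band by multiplication with `k`.
-/

section Band

variable {R : Type*} {m : ℕ}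

/-- `a i` sits at position `(i, i + k)`, so `k < 0` gives a band below the diagonal; the
coefficients are indexed by `ℤ` so that shifted indices never truncate. -/
def band [Zero R] (m : ℕ) (k : ℤ) (a : ℤ → R) : Matrix (Fin m) (Fin m) R :=
  of fun i j => if (j : ℤ) = i + k then a i else 0

theorem band_apply [Zero R] (k : ℤ) (a : ℤ → R) (i j : Fin m) :
    band m k a i j = if (j : ℤ) = i + k then a i else 0 :=
  rfl

theorem band_sub_band [AddGroup R] (k : ℤ) (a b : ℤ → R) :
    band m k a - band m k b = band m k fun i => a i - b i := by
  ext i j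
  simp only [Matrix.sub_apply, band_apply]
  split_ifs <;> simp

theorem smul_band [Zero R] {S : Type*} [SMulZeroClass S R] (c : S) (k : ℤ) (a : ℤ → R) :
    c • band m k a = band m k fun i => c • a i := by
  ext i j
  simp only [Matrix.smul_apply, band_apply]
  split_ifs <;> simp

theorem neg_band [AddGroup R] (k : ℤ) (a : ℤ → R) :
    -band m k a = band m k fun i => -a i := by
  ext i j
  simp only [Matrix.neg_apply, band_apply]
  split_ifs <;> simp

theorem band_mul_band [Semiring R] (k l : ℤ) (a b : ℤ → R)
    (h : ∀ i : ℤ, 0 ≤ i → i < m → 0 ≤ i + k + l → i + k + l < m → (i + k < 0 ∨ m ≤ i + k) →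
      a i * b (i + k) = 0) :
    band m k a * band m l b = band m (k + l) fun i => a i * b (i + k) := by
  ext i j
  simp only [mul_apply, band_apply]
  by_cases hmid : 0 ≤ (i : ℤ) + k ∧ (i : ℤ) + k < m
  · let t : Fin m := ⟨(i + k).toNat, by omega⟩
    have ht : (t : ℤ) = i + k := by simp only [Int.ofNat_toNat, sup_eq_left, t]; omega
    rw [Finset.sum_eq_single t]
    · simp only [ht, if_true, ← add_assoc]
      split_ifs <;> simp
    · intro s _ hs
      rw [if_neg, zero_mul]
      exact fun h' => hs (Fin.ext (by omega))
    · simp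
  · rw [Finset.sum_eq_zero fun s _ => by rw [if_neg (by omega), zero_mul]]
    split_ifs with hj
    · exact (h i (by omega) (by omega) (by omega) (by omega) (by omega)).symm
    · rfl

end Band

theorem Hmat_eq_band (n : ℕ) : Hmat n = band (2 * n + 1) 0 fun i => (n : ℚ) - i := by
  ext i j
  simp only [Hmat, band_apply, add_zero, Int.cast_natCast, Fin.ext_iff]
  split_ifs <;> first | rfl | omega

theorem Hmat_mul_band_sub_band_mul_Hmat (n : ℕ) (k : ℤ) (a : ℤ → ℚ) :
    Hmat n * band (2 * n + 1) k a - band (2 * n + 1) k a * Hmat n =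
      (k : ℚ) • band (2 * n + 1) k a := by
  rw [Hmat_eq_band, band_mul_band, band_mul_band]
  · simp only [zero_add, add_zero, band_sub_band, smul_band, smul_eq_mul]
    congr
    funext i
    push_cast
    ring
  all_goals intro i _ _ _ _ _; omega

theorem Jminus_eq_band (n : ℕ) : Jminus n = band (2 * n + 1) (-1) 1 := by
  ext i j
  simp only [Jminus, band_apply, Pi.one_apply]
  split_ifs <;> first | rfl | omega

def jplusCoeff (n : ℕ) (i : ℤ) : ℚ :=
  if Even i then (n : ℚ) - ((i / 2 : ℤ) : ℚ) else -(((i + 1) / 2 : ℤ) : ℚ)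

theorem jplusCoeff_two_mul (n : ℕ) (t : ℤ) : jplusCoeff n (2 * t) = n - t := by
  simp [jplusCoeff]

theorem jplusCoeff_two_mul_add_one (n : ℕ) (t : ℤ) : jplusCoeff n (2 * t + 1) = -(t + 1) := by
  have : (2 * t + 1 + 1) / 2 = t + 1 := by omega
  simp [jplusCoeff, this]

theorem jplusCoeff_add_jplusCoeff_add_one (n : ℕ) (i : ℤ) :
    jplusCoeff n i + jplusCoeff n (i + 1) = n - i - 1 := by
  obtain ⟨t, rfl | rfl⟩ := Int.even_or_odd' i
  · rw [jplusCoeff_two_mul, jplusCoeff_two_mul_add_one]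
    push_cast; ring
  · rw [show 2 * t + 1 + 1 = 2 * (t + 1) by ring, jplusCoeff_two_mul, jplusCoeff_two_mul_add_one]
    push_cast; ring

theorem jplusCoeff_neg_one (n : ℕ) : jplusCoeff n (-1) = 0 := by
  simpa using jplusCoeff_two_mul_add_one n (-1)

theorem jplusCoeff_two_mul_self (n : ℕ) : jplusCoeff n (2 * n) = 0 := by
  simp [jplusCoeff_two_mul]

theorem jplusCoeff_sub_two (n : ℕ) (i : ℤ) : jplusCoeff n (i - 2) = jplusCoeff n i + 1 := by
  obtain ⟨t, rfl | rfl⟩ := Int.even_or_odd' i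
  · rw [show 2 * t - 2 = 2 * (t - 1) by ring, jplusCoeff_two_mul, jplusCoeff_two_mul]
    push_cast; ring
  · rw [show 2 * t + 1 - 2 = 2 * (t - 1) + 1 by ring, jplusCoeff_two_mul_add_one,
      jplusCoeff_two_mul_add_one]
    push_cast; ring

theorem jplusCoeff_mul_sub_mul_sub_two (n : ℕ) (i : ℤ) :
    jplusCoeff n i * jplusCoeff n (i + 1) - jplusCoeff n (i - 2) * jplusCoeff n (i - 1) =
      i - n := by
  rw [jplusCoeff_sub_two, show i - 1 = i + 1 - 2 by ring, jplusCoeff_sub_two]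
  linear_combination -jplusCoeff_add_jplusCoeff_add_one n i

theorem Jplus_eq_band (n : ℕ) : Jplus n = band (2 * n + 1) 1 (jplusCoeff n) := by
  ext i j
  simp only [Jplus, band_apply]
  obtain ⟨t, hi | hi⟩ := Nat.even_or_odd' (i : ℕ)
  · have h2 : 2 * t / 2 = t := by omega
    have h3 : ((2 * t : ℕ) : ℤ) = 2 * (t : ℤ) := by push_cast; ring
    simp only [hi, h2, h3, Nat.mul_mod_right, if_true, jplusCoeff_two_mul, Int.cast_natCast]
    split_ifs <;> first | rfl | omega
  · have h1 : (2 * t + 1) % 2 = 1 := by omega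
    have h2 : (2 * t + 1 + 1) / 2 = t + 1 := by omega
    have h3 : ((2 * t + 1 : ℕ) : ℤ) = 2 * (t : ℤ) + 1 := by push_cast; ring
    simp only [hi, h1, h2, h3, one_ne_zero, if_false, jplusCoeff_two_mul_add_one]
    push_cast
    split_ifs <;> first | rfl | omega

theorem Jplus_sq (n : ℕ) :
    Jplus n ^ 2 = band (2 * n + 1) 2 fun i => jplusCoeff n i * jplusCoeff n (i + 1) := by
  rw [sq, Jplus_eq_band, band_mul_band]
  · rfl
  · intro i _ _ _ _ _
    omega

theorem Jminus_sq (n : ℕ) : Jminus n ^ 2 = band (2 * n + 1) (-2) 1 := by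
  rw [sq, Jminus_eq_band, band_mul_band]
  · simp only [Int.reduceAdd, Pi.one_apply, mul_one]
    rfl
  · intro i _ _ _ _ _
    omega

theorem Jplus_sq_mul_Jminus_sq_sub (n : ℕ) :
    Jplus n ^ 2 * Jminus n ^ 2 - Jminus n ^ 2 * Jplus n ^ 2 = -Hmat n := by
  rw [Jplus_sq, Jminus_sq, Hmat_eq_band, band_mul_band, band_mul_band, neg_band]
  · simp only [Int.reduceAdd, band_sub_band, Pi.one_apply, mul_one, one_mul]
    congr
    funext i
    rw [show i + -2 = i - 2 by ring, show i - 2 + 1 = i - 1 by ring,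
      jplusCoeff_mul_sub_mul_sub_two]
    ring
  · intro i _ _ _ _ _
    obtain rfl | rfl : i = 0 ∨ i = 1 := by omega
    all_goals norm_num [jplusCoeff_neg_one]
  · intro i _ _ _ _ _
    obtain rfl | rfl : i = 2 * n - 1 ∨ i = 2 * n := by omega
    all_goals simp [jplusCoeff_two_mul_self]

theorem Jminus_mul_Jplus_sq_sub (n : ℕ) :
    Jminus n * Jplus n ^ 2 - Jplus n ^ 2 * Jminus n = Jplus n := by
  rw [Jplus_sq, Jminus_eq_band, Jplus_eq_band, band_mul_band, band_mul_band]
  · simp only [Int.reduceAdd, band_sub_band, Pi.one_apply, mul_one, one_mul]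
    congr
    funext i
    rw [show i + -1 + 1 = i by ring, show i + -1 = i + 1 - 2 by ring, jplusCoeff_sub_two]
    ring
  · intro i _ _ _ _ _
    obtain rfl : i = 2 * n - 1 := by omega
    simp [jplusCoeff_two_mul_self]
  · intro i _ _ _ _ _
    obtain rfl : i = 0 := by omega
    norm_num [jplusCoeff_neg_one]

theorem Jplus_mul_Jminus_sq_sub (n : ℕ) :
    Jplus n * Jminus n ^ 2 - Jminus n ^ 2 * Jplus n = -Jminus n := by
  rw [Jminus_sq, Jminus_eq_band, Jplus_eq_band, band_mul_band, band_mul_band, neg_band]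
  · simp only [Int.reduceAdd, band_sub_band, Pi.one_apply, mul_one, one_mul]
    congr
    funext i
    rw [← sub_eq_add_neg, jplusCoeff_sub_two]
    ring
  · intro i _ _ _ _ _
    obtain rfl : i = 1 := by omega
    norm_num [jplusCoeff_neg_one]
  · intro i _ _ _ _ _
    obtain rfl : i = 2 * n := by omega
    simp [jplusCoeff_two_mul_self]

theorem osp12_bosonic_relations_general (n : ℕ) :
    Hmat n * (Jplus n) ^ 2 - (Jplus n) ^ 2 * Hmat n = (2 : ℚ) • (Jplus n) ^ 2 ∧
    Hmat n * (Jminus n) ^ 2 - (Jminus n) ^ 2 * Hmat n = -((2 : ℚ) • (Jminus n) ^ 2) ∧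
    (Jplus n) ^ 2 * (Jminus n) ^ 2 - (Jminus n) ^ 2 * (Jplus n) ^ 2 = -Hmat n ∧
    Jminus n * (Jplus n) ^ 2 - (Jplus n) ^ 2 * Jminus n = Jplus n ∧
    Jplus n * (Jminus n) ^ 2 - (Jminus n) ^ 2 * Jplus n = -Jminus n := by
  refine ⟨?_, ?_, Jplus_sq_mul_Jminus_sq_sub n, Jminus_mul_Jplus_sq_sub n,
    Jplus_mul_Jminus_sq_sub n⟩
  · rw [Jplus_sq, Hmat_mul_band_sub_band_mul_Hmat]
    norm_num
  · rw [Jminus_sq, Hmat_mul_band_sub_band_mul_Hmat]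
    norm_num

/-- With X_± = J_±², the relations [H, X_±] = ±2X_±, [X₊, X₋] = -H,
[J₋, X₊] = J₊ and [J₊, X₋] = -J₋ hold. -/
theorem osp12_bosonic_relations (n : ℕ) (hn : 1 ≤ n) :
    Hmat n * (Jplus n) ^ 2 - (Jplus n) ^ 2 * Hmat n = (2 : ℚ) • (Jplus n) ^ 2 ∧
    Hmat n * (Jminus n) ^ 2 - (Jminus n) ^ 2 * Hmat n = -((2 : ℚ) • (Jminus n) ^ 2) ∧
    (Jplus n) ^ 2 * (Jminus n) ^ 2 - (Jminus n) ^ 2 * (Jplus n) ^ 2 = -Hmat n ∧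
    Jminus n * (Jplus n) ^ 2 - (Jplus n) ^ 2 * Jminus n = Jplus n ∧
    Jplus n * (Jminus n) ^ 2 - (Jminus n) ^ 2 * Jplus n = -Jminus n :=
  osp12_bosonic_relations_general n
end

section
/- Let M_1 be the (2n+1)×(2n+1) matrix with superdiagonal entries (n, 1, n-1, 2, n-2, 3, ..., n), i.e. (M_1)_{2j-1,2j} = n-j+1 and (M_1)_{2j,2j+1} = j, and all other entries zero. Let H = diag(n, n-1, ..., -n) and let J_+ be the superdiagonal matrix with entries (n, -1, n-1, -2, ..., -n). Then for every natural number p ≥ 1, the graded commutation relations [H, M_1^p} = p·M_1^p and [J_+, M_1^p} = 0 hold, where the graded bracket of two matrices with ℤ₂-grading deg(E_{ij}) = i+j (mod 2) is [A, B}_{ik} = Σ_j (A_{ij}B_{jk} - (-1)^{(i+j)(j+k)} B_{ij}A_{jk}). -/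
open Matrix

variable (n : ℕ)

/-- The graded commutator of matrices with ℤ₂-grading i+j (mod 2) on the (i,j) entry:
[A,B}_{ik} = Σ_j (A_{ij}B_{jk} - (-1)^{(i+j)(j+k)} B_{ij}A_{jk}). -/
def gradedBracket {N : ℕ} (A B : Matrix (Fin N) (Fin N) ℚ) : Matrix (Fin N) (Fin N) ℚ :=
  fun i k => ∑ j : Fin N,
    (A i j * B j k - (-1 : ℚ) ^ (((i : ℕ) + (j : ℕ)) * ((j : ℕ) + (k : ℕ))) * B i j * A j k)

lemma neg_one_pow_mod_eq {a b : ℕ} (h : a % 2 = b % 2) : ((-1:ℚ))^a = (-1)^b := by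
  rw [← Nat.div_add_mod a 2, ← Nat.div_add_mod b 2, h, pow_add, pow_add, pow_mul, pow_mul]
  norm_num

lemma Mone_supp {n : ℕ} {i j : Fin (2*n+1)} (h : Mone n i j ≠ 0) : (j:ℕ) = (i:ℕ) + 1 := by
  by_contra hc
  simp [Mone, hc] at h

lemma Mone_pow_supp {n : ℕ} (p : ℕ) {i k : Fin (2*n+1)} (h : ((Mone n)^p) i k ≠ 0) :
    (k:ℕ) = (i:ℕ) + p := by
  induction p generalizing i k with
  | zero =>
    have : i = k := by
      by_contra hne
      rw [pow_zero, Matrix.one_apply_ne hne] at h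
      exact h rfl
    subst this; simp
  | succ q ih =>
    rw [pow_succ, Matrix.mul_apply] at h
    obtain ⟨j, _, hj⟩ := Finset.exists_ne_zero_of_sum_ne_zero h
    have h1 := ih (left_ne_zero_of_mul hj)
    have h2 := Mone_supp (right_ne_zero_of_mul hj)
    omega

lemma Jplus_eq_sign {n : ℕ} (i k : Fin (2*n+1)) :
    Jplus n i k = (-1:ℚ)^(i:ℕ) * Mone n i k := by
  unfold Jplus Mone
  rcases Nat.even_or_odd (i:ℕ) with h | h
  · rw [h.neg_one_pow, one_mul]
    simp [Nat.even_iff.mp h]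
  · rw [h.neg_one_pow]
    have h1 : (i:ℕ) % 2 = 1 := Nat.odd_iff.mp h
    simp only [h1, one_ne_zero, if_false, mul_ite, mul_zero]
    split_ifs <;> ring

lemma bracketH {n : ℕ} (p : ℕ) :
    gradedBracket (Hmat n) ((Mone n)^p) = (p : ℚ) • (Mone n)^p := by
  ext i k
  unfold gradedBracket
  rw [Finset.sum_sub_distrib]
  have hs1 : ∑ j, Hmat n i j * ((Mone n)^p) j k = ((n:ℚ) - (i:ℕ)) * ((Mone n)^p) i k := by
    rw [Finset.sum_eq_single i]
    · simp [Hmat]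
    · intro j _ hj
      simp [Hmat, if_neg (Ne.symm hj)]
    · simp
  have hs2 : ∑ j : Fin (2*n+1), (-1:ℚ)^(((i:ℕ)+(j:ℕ))*((j:ℕ)+(k:ℕ))) * ((Mone n)^p) i j * Hmat n j k
      = ((Mone n)^p) i k * ((n:ℚ) - (k:ℕ)) := by
    rw [Finset.sum_eq_single k]
    · have hsgn : (-1:ℚ)^(((i:ℕ)+(k:ℕ))*((k:ℕ)+(k:ℕ))) = 1 :=
        Even.neg_one_pow ⟨((i:ℕ)+(k:ℕ))*(k:ℕ), by ring⟩
      simp [Hmat, hsgn]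
    · intro j _ hj
      simp [Hmat, hj]
    · simp
  rw [hs1, hs2]
  rw [Matrix.smul_apply, smul_eq_mul]
  by_cases h0 : ((Mone n)^p) i k = 0
  · simp [h0]
  · have hk := Mone_pow_supp p h0
    have hkq : ((k:ℕ):ℚ) = ((i:ℕ):ℚ) + (p:ℚ) := by rw [hk]; push_cast; ring
    rw [hkq]; ring

lemma bracketJ {n : ℕ} (p : ℕ) : gradedBracket (Jplus n) ((Mone n)^p) = 0 := by
  ext i k
  unfold gradedBracket
  have term : ∀ j : Fin (2*n+1),
      Jplus n i j * ((Mone n)^p) j k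
        - (-1:ℚ)^(((i:ℕ)+(j:ℕ))*((j:ℕ)+(k:ℕ))) * ((Mone n)^p) i j * Jplus n j k
      = (-1:ℚ)^(i:ℕ) * (Mone n i j * ((Mone n)^p) j k - ((Mone n)^p) i j * Mone n j k) := by
    intro j
    rw [Jplus_eq_sign, Jplus_eq_sign]
    have key : (-1:ℚ)^(((i:ℕ)+(j:ℕ))*((j:ℕ)+(k:ℕ))) * (((Mone n)^p) i j * ((-1:ℚ)^(j:ℕ) * Mone n j k))
        = (-1:ℚ)^(i:ℕ) * (((Mone n)^p) i j * Mone n j k) := by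
      by_cases h1 : ((Mone n)^p) i j = 0
      · simp [h1]
      · by_cases h2 : Mone n j k = 0
        · simp [h2]
        · have hj := Mone_pow_supp p h1
          have hk := Mone_supp h2
          have hpar : ((((i:ℕ)+(j:ℕ))*((j:ℕ)+(k:ℕ))) + (j:ℕ)) % 2 = (i:ℕ) % 2 := by
            rcases Nat.mod_two_eq_zero_or_one ((i:ℕ)+(j:ℕ)) with h|h <;>
              rcases Nat.mod_two_eq_zero_or_one ((j:ℕ)+(k:ℕ)) with h'|h' <;>
                rw [Nat.add_mod, Nat.mul_mod, h, h'] <;> omega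
          rw [← neg_one_pow_mod_eq hpar, pow_add]
          ring
    calc (-1:ℚ)^(i:ℕ) * Mone n i j * ((Mone n)^p) j k
        - (-1:ℚ)^(((i:ℕ)+(j:ℕ))*((j:ℕ)+(k:ℕ))) * ((Mone n)^p) i j * ((-1:ℚ)^(j:ℕ) * Mone n j k)
        = (-1:ℚ)^(i:ℕ) * Mone n i j * ((Mone n)^p) j k
          - (-1:ℚ)^(((i:ℕ)+(j:ℕ))*((j:ℕ)+(k:ℕ))) * (((Mone n)^p) i j * ((-1:ℚ)^(j:ℕ) * Mone n j k)) := by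
          ring
      _ = (-1:ℚ)^(i:ℕ) * Mone n i j * ((Mone n)^p) j k
          - (-1:ℚ)^(i:ℕ) * (((Mone n)^p) i j * Mone n j k) := by rw [key]
      _ = (-1:ℚ)^(i:ℕ) * (Mone n i j * ((Mone n)^p) j k - ((Mone n)^p) i j * Mone n j k) := by ring
  rw [Finset.sum_congr rfl (fun j _ => term j), ← Finset.mul_sum]
  have hz : (∑ j, (Mone n i j * ((Mone n)^p) j k - ((Mone n)^p) i j * Mone n j k)) = 0 := by
    rw [Finset.sum_sub_distrib, ← Matrix.mul_apply, ← Matrix.mul_apply,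
      ← pow_succ' (Mone n) p, ← pow_succ (Mone n) p, sub_self]
  rw [hz, mul_zero]
  simp

/-- For every p ≥ 1, the graded commutation relations [H, M₁ᵖ} = p·M₁ᵖ and
[J₊, M₁ᵖ} = 0 hold. -/
theorem Mone_pow_highest_weight (n : ℕ) (hn : 1 ≤ n) (p : ℕ) (hp : 1 ≤ p) :
    gradedBracket (Hmat n) ((Mone n) ^ p) = (p : ℚ) • (Mone n) ^ p ∧
    gradedBracket (Jplus n) ((Mone n) ^ p) = 0 := by
  exact ⟨bracketH p, bracketJ p⟩
end

section
/- For the super Möbius transformation Z' = (aZ+b)/(cZ+d) + Θ(γZ+δ)/(cZ+d)², Θ' = (γZ+δ)/(cZ+d) + Θ(1+½δγ)/(cZ+d) with ad-bc = 1, the super Jacobian is given by D_Θ Θ' = (c̃Z + d̃ + Θγ̃)^{-1} where c̃ = c(1 - ½δγ), d̃ = d(1 - ½δγ), γ̃ = cδ - dγ. -/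
/-- The super Jacobian of the super Möbius transformation:
D_Θ Θ' = (c̃Z + d̃ + Θγ̃)⁻¹ with c̃ = c(1-½δγ), d̃ = d(1-½δγ), γ̃ = cδ - dγ.
Superfields F(Z,Θ) = F₀ + ΘF₁ are encoded by components; here
D_ΘΘ' = (Θ'₁, ∂Θ'₀) with Θ'₀ = (γZ+δ)u, Θ'₁ = (1+½δγ)u, u = (cZ+d)⁻¹,
and the superfield c̃Z + d̃ + Θγ̃ has even component F₀ = (cZ+d)(1-½δγ) and odd
component F₁ = γ̃ = cδ - dγ.  The inverse relation states that the superfield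
product (c̃Z + d̃ + Θγ̃)·D_ΘΘ' equals 1 (and likewise in the other order):
F₀G₀ = 1 ∧ F₁G₀ + F₀G₁ = 0 ∧ G₀F₀ = 1 ∧ G₁F₀ + G₀F₁ = 0. -/
theorem superMobius_jacobian {A : Type*} [Ring A] [Algebra ℚ A]
    (dz : A → A) (Z γ δ u : A) (a b c d : ℚ)
    (hZc : ∀ x, Z * x = x * Z) (huc : ∀ x, u * x = x * u)
    (hγ2 : γ * γ = 0) (hδ2 : δ * δ = 0) (hγδ : γ * δ = -(δ * γ))
    (hdet : a * d - b * c = 1)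
    (hu : u * (c • Z + d • (1 : A)) = 1)
    (hadd : ∀ x y, dz (x + y) = dz x + dz y)
    (hsmul : ∀ (q : ℚ) x, dz (q • x) = q • dz x)
    (hLeib : ∀ x y, dz (x * y) = dz x * y + x * dz y)
    (hdzZ : dz Z = 1) (hdzγ : dz γ = 0) (hdzδ : dz δ = 0) :
    ((c • Z + d • (1 : A)) * (1 - (1/2 : ℚ) • (δ * γ)))
        * ((1 + (1/2 : ℚ) • (δ * γ)) * u) = 1 ∧
    (c • δ - d • γ) * ((1 + (1/2 : ℚ) • (δ * γ)) * u)
      + ((c • Z + d • (1 : A)) * (1 - (1/2 : ℚ) • (δ * γ))) * dz ((γ * Z + δ) * u) = 0 ∧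
    ((1 + (1/2 : ℚ) • (δ * γ)) * u)
        * ((c • Z + d • (1 : A)) * (1 - (1/2 : ℚ) • (δ * γ))) = 1 ∧
    dz ((γ * Z + δ) * u) * ((c • Z + d • (1 : A)) * (1 - (1/2 : ℚ) • (δ * γ)))
      + ((1 + (1/2 : ℚ) • (δ * γ)) * u) * (c • δ - d • γ) = 0 := by
  set S : A := c • Z + d • (1 : A) with hSdef
  set e : A := δ * γ with hedef
  set T : A := γ * Z + δ with hTdef
  set g : A := c • δ - d • γ with hgdef
  set P : A := 1 - (1/2 : ℚ) • e with hPdef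
  set Q : A := 1 + (1/2 : ℚ) • e with hQdef
  -- commutation of S with everything
  have hScomm : ∀ x : A, S * x = x * S := by
    intro x
    rw [hSdef]
    simp only [add_mul, mul_add, smul_mul_assoc, mul_smul_comm, hZc, one_mul, mul_one]
  -- nilpotency consequences
  have heγ : e * γ = 0 := by rw [hedef, mul_assoc, hγ2, mul_zero]
  have hδe : δ * e = 0 := by rw [hedef, ← mul_assoc, hδ2, zero_mul]
  have hγe : γ * e = 0 := by
    rw [hedef, ← mul_assoc, hγδ, neg_mul, mul_assoc, hγ2, mul_zero, neg_zero]
  have heδ : e * δ = 0 := by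
    rw [hedef, mul_assoc, hγδ, mul_neg, ← mul_assoc, hδ2, zero_mul, neg_zero]
  have hee : e * e = 0 := by rw [hedef, ← mul_assoc, heδ, zero_mul]
  have hTe : T * e = 0 := by
    rw [hTdef, add_mul, mul_assoc, hZc, ← mul_assoc, hγe, zero_mul, hδe, add_zero]
  have heT : e * T = 0 := by
    rw [hTdef, mul_add, ← mul_assoc, heγ, zero_mul, heδ, add_zero]
  have hge : g * e = 0 := by
    rw [hgdef, sub_mul, smul_mul_assoc, smul_mul_assoc, hδe, hγe, smul_zero, smul_zero,
      sub_zero]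
  have heg : e * g = 0 := by
    rw [hgdef, mul_sub, mul_smul_comm, mul_smul_comm, heδ, heγ, smul_zero, smul_zero,
      sub_zero]
  -- P, Q inverse to each other
  have hsq : ((1/2 : ℚ) • e) * ((1/2 : ℚ) • e) = 0 := by
    rw [smul_mul_assoc, mul_smul_comm, hee, smul_zero, smul_zero]
  have hPQ : P * Q = 1 := by
    rw [hPdef, hQdef, sub_mul, one_mul, mul_add, mul_one, hsq, add_zero,
      add_sub_cancel_right]
  have hQP : Q * P = 1 := by
    rw [hQdef, hPdef, add_mul, one_mul, mul_sub, mul_one, hsq, sub_zero]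
    abel
  -- absorption lemmas
  have hgQ : g * Q = g := by
    rw [hQdef, mul_add, mul_one, mul_smul_comm, hge, smul_zero, add_zero]
  have hQg : Q * g = g := by
    rw [hQdef, add_mul, one_mul, smul_mul_assoc, heg, smul_zero, add_zero]
  have hPγ : P * γ = γ := by
    rw [hPdef, sub_mul, one_mul, smul_mul_assoc, heγ, smul_zero, sub_zero]
  have hγP : γ * P = γ := by
    rw [hPdef, mul_sub, mul_one, mul_smul_comm, hγe, smul_zero, sub_zero]
  have hPT : P * T = T := by
    rw [hPdef, sub_mul, one_mul, smul_mul_assoc, heT, smul_zero, sub_zero]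
  have hTP : T * P = T := by
    rw [hPdef, mul_sub, mul_one, mul_smul_comm, hTe, smul_zero, sub_zero]
  -- derivative computations
  have hSu : S * u = 1 := by rw [← huc]; exact hu
  have hdz1 : dz (1 : A) = 0 := by have := hLeib 1 1; simpa using this
  have hdzS : dz S = c • (1 : A) := by
    rw [hSdef, hadd, hsmul, hsmul, hdzZ, hdz1, smul_zero, add_zero]
  have hdzu : dz u = -(c • (u * u)) := by
    have h0 : dz u * S + u * c • (1 : A) = 0 := by
      have h0 : dz (u * S) = 0 := by rw [hu, hdz1]
      rwa [hLeib, hdzS] at h0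
    have h1 : dz u * S = -(u * c • (1 : A)) := eq_neg_of_add_eq_zero_left h0
    have h2 : dz u * (S * u) = -(u * c • (1 : A)) * u := by rw [← mul_assoc, h1]
    rw [hSu, mul_one] at h2
    rw [h2, mul_smul_comm, mul_one, neg_mul, smul_mul_assoc]
  have hdzT : dz T = γ := by
    rw [hTdef, hadd, hLeib, hdzγ, hdzδ, hdzZ, zero_mul, zero_add, mul_one, add_zero]
  have hdzΘ : dz (T * u) = γ * u - c • (T * (u * u)) := by
    rw [hLeib, hdzT, hdzu, mul_neg, mul_smul_comm, sub_eq_add_neg]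
  -- key cancellation identity : γ = c•((γ*Z)*u) + d•(γ*u)
  have hγ1 : γ = c • ((γ * Z) * u) + d • (γ * u) := by
    calc γ = γ * (S * u) := by rw [hSu, mul_one]
      _ = (γ * S) * u := by rw [mul_assoc]
      _ = (c • (γ * Z) + d • (γ * 1)) * u := by
          rw [hSdef, mul_add, mul_smul_comm, mul_smul_comm]
      _ = c • ((γ * Z) * u) + d • (γ * u) := by
          rw [mul_one, add_mul, smul_mul_assoc, smul_mul_assoc]
  -- the common final identity
  have hfin : g * u + (γ - c • (T * u)) = 0 := by
    have hTu : T * u = (γ * Z) * u + δ * u := by rw [hTdef, add_mul]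
    have hgu : g * u = c • (δ * u) - d • (γ * u) := by
      rw [hgdef, sub_mul, smul_mul_assoc, smul_mul_assoc]
    rw [hTu, hgu, smul_add]
    nth_rewrite 2 [hγ1]
    abel
  -- pieces for conjuncts 2 and 4
  have hSdzΘ : S * dz (T * u) = γ - c • (T * u) := by
    rw [hdzΘ, mul_sub, mul_smul_comm]
    have h1 : S * (γ * u) = γ := by
      rw [hScomm, mul_assoc, hu, mul_one]
    have h2 : S * (T * (u * u)) = T * u := by
      rw [hScomm, mul_assoc, mul_assoc, hu, mul_one]
    rw [h1, h2]
  have hPdzΘ : P * dz (T * u) = dz (T * u) := by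
    rw [hdzΘ, mul_sub, mul_smul_comm, ← mul_assoc, hPγ, ← mul_assoc, hPT]
  have huuP : (u * u) * P = P * (u * u) := by
    rw [mul_assoc, huc P, ← mul_assoc, huc P, mul_assoc]
  have hdzΘP : dz (T * u) * P = dz (T * u) := by
    rw [hdzΘ, sub_mul, smul_mul_assoc, mul_assoc γ u P, huc P, ← mul_assoc γ P u, hγP,
      mul_assoc T (u * u) P, huuP, ← mul_assoc T P, hTP]
  refine ⟨?_, ?_, ?_, ?_⟩
  · rw [mul_assoc, ← mul_assoc P Q u, hPQ, one_mul, hSu]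
  · rw [← mul_assoc g Q u, hgQ, mul_assoc S P, hPdzΘ, hSdzΘ]
    exact hfin
  · rw [mul_assoc, ← mul_assoc u S P, hu, one_mul, hQP]
  · rw [← mul_assoc (dz (T * u)) S P, ← hScomm (dz (T * u)), hSdzΘ,
      sub_mul, smul_mul_assoc, hγP, mul_assoc T u P, huc P, ← mul_assoc T P u, hTP,
      mul_assoc Q u g, huc g, ← mul_assoc Q g u, hQg,
      add_comm (γ - c • (T * u)) (g * u)]
    exact hfin
end

section
/- In the super Virasoro/W algebra for n = 3 (matrix parametrization vs. conformal-field parametrization), the change of variables W_7 = V_7 + 18 V_2 V_5 + (9/5)·[2V_2(D³V_2) - 3(DV_2)(∂V_2) - 4R·V_2²] expresses the bracketed term, up to the factor 6, as the super Gordan transvectant J³_{2,2}(V,V): for any even superfield V of weight 1 and superprojective connection R, 6·J³_{2,2}(V,V) = 2V(∇³V) - 3(∇V)(∇²V) = 2V(D³V) - 3(DV)(∂V) - 4R·V², where ∇ = ∇_{(2)} is the covariant derivative ∇_{(p)} = D - pB and R = ∂B - B(DB). -/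
/-- The super Gordan transvectant identity
6·J³_{2,2}(V,V) = 2V(∇³V) - 3(∇V)(∇²V) = 2V(D³V) - 3(DV)(∂V) - 4R·V²
for an even superfield V of weight 1, where ∇_{(p)} = D - pB, B is an odd
superaffine connection, R = ∂B - B(DB) and ∂ = D².  The superfield ring S carries
a parity involution σ (σB = -B, σV = V), D is an odd graded derivation, and the
product is supercommutative: x·y = ½(yx + σ(y)x + yσ(x) - σ(y)σ(x)). -/
theorem super_transvectant_J3_22 {S : Type*} [Ring S] [Algebra ℚ S]
    (D : S → S) (σ : S →+* S) (B V : S)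
    (hDadd : ∀ x y, D (x + y) = D x + D y)
    (hDsmul : ∀ (q : ℚ) (x : S), D (q • x) = q • D x)
    (hDLeib : ∀ x y, D (x * y) = D x * y + σ x * D y)
    (hσD : ∀ x, σ (D x) = -D (σ x))
    (hσσ : ∀ x, σ (σ x) = x)
    (hsc : ∀ x y : S, x * y = (1/2 : ℚ) • (y * x + σ y * x + y * σ x - σ y * σ x))
    (hBodd : σ B = -B) (hVeven : σ V = V)
    -- the covariant derivatives ∇V = ∇₍₂₎V, ∇²V = ∇₍₃₎∇₍₂₎V, ∇³V = ∇₍₄₎∇₍₃₎∇₍₂₎V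
    (n1 n2 n3 R : S)
    (hn1 : n1 = D V - 2 * (B * V))
    (hn2 : n2 = D n1 - 3 * (B * n1))
    (hn3 : n3 = D n2 - 4 * (B * n2))
    -- the superprojective connection R = ∂B - B(DB)
    (hR : R = D (D B) - B * D B) :
    2 * (V * n3) - 3 * (n1 * n2)
      = 2 * (V * D (D (D V))) - 3 * (D V * D (D V)) - 4 * (R * (V * V)) := by
  have hDneg : ∀ x : S, D (-x) = -D x := by
    intro x
    have h := hDsmul (-1 : ℚ) x
    simpa using h
  have hpdB : σ (D B) = D B := by rw [hσD, hBodd, hDneg, neg_neg]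
  have hpdV : σ (D V) = -(D V) := by rw [hσD, hVeven]
  have hpddB : σ (D (D B)) = -(D (D B)) := by rw [hσD, hpdB]
  have hpddV : σ (D (D V)) = D (D V) := by rw [hσD, hpdV, hDneg, neg_neg]
  have hpdddV : σ (D (D (D V))) = -(D (D (D V))) := by rw [hσD, hpddV]
  have heR : ∀ x y : S, σ y = y → x * y = y * x := by
    intro x y h
    rw [hsc x y, h]
    module
  have heL : ∀ x y : S, σ x = x → x * y = y * x := by
    intro x y h
    rw [hsc x y, h]
    module
  have hoo : ∀ x y : S, σ x = -x → σ y = -y → x * y = -(y * x) := by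
    intro x y hx hy
    rw [hsc x y, hx, hy]
    simp only [neg_mul, mul_neg, neg_neg]
    module
  have cdBB : (D B) * (B) = (B) * (D B) := heL _ _ hpdB
  have cdBB' : ∀ z : S, (D B) * ((B) * z) = (B) * ((D B) * z) := by
    intro z; rw [← mul_assoc, cdBB, mul_assoc]
  have cddBB : (D (D B)) * (B) = -((B) * (D (D B))) := hoo _ _ hpddB hBodd
  have cddBB' : ∀ z : S, (D (D B)) * ((B) * z) = -((B) * ((D (D B)) * z)) := by
    intro z; rw [← mul_assoc, cddBB, neg_mul, mul_assoc]
  have cVB : (V) * (B) = (B) * (V) := heL _ _ hVeven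
  have cVB' : ∀ z : S, (V) * ((B) * z) = (B) * ((V) * z) := by
    intro z; rw [← mul_assoc, cVB, mul_assoc]
  have cdVB : (D V) * (B) = -((B) * (D V)) := hoo _ _ hpdV hBodd
  have cdVB' : ∀ z : S, (D V) * ((B) * z) = -((B) * ((D V) * z)) := by
    intro z; rw [← mul_assoc, cdVB, neg_mul, mul_assoc]
  have cddVB : (D (D V)) * (B) = (B) * (D (D V)) := heL _ _ hpddV
  have cddVB' : ∀ z : S, (D (D V)) * ((B) * z) = (B) * ((D (D V)) * z) := by
    intro z; rw [← mul_assoc, cddVB, mul_assoc]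
  have cdddVB : (D (D (D V))) * (B) = -((B) * (D (D (D V)))) := hoo _ _ hpdddV hBodd
  have cdddVB' : ∀ z : S, (D (D (D V))) * ((B) * z) = -((B) * ((D (D (D V))) * z)) := by
    intro z; rw [← mul_assoc, cdddVB, neg_mul, mul_assoc]
  have cddBdB : (D (D B)) * (D B) = (D B) * (D (D B)) := heR _ _ hpdB
  have cddBdB' : ∀ z : S, (D (D B)) * ((D B) * z) = (D B) * ((D (D B)) * z) := by
    intro z; rw [← mul_assoc, cddBdB, mul_assoc]
  have cVdB : (V) * (D B) = (D B) * (V) := heR _ _ hpdB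
  have cVdB' : ∀ z : S, (V) * ((D B) * z) = (D B) * ((V) * z) := by
    intro z; rw [← mul_assoc, cVdB, mul_assoc]
  have cdVdB : (D V) * (D B) = (D B) * (D V) := heR _ _ hpdB
  have cdVdB' : ∀ z : S, (D V) * ((D B) * z) = (D B) * ((D V) * z) := by
    intro z; rw [← mul_assoc, cdVdB, mul_assoc]
  have cddVdB : (D (D V)) * (D B) = (D B) * (D (D V)) := heR _ _ hpdB
  have cddVdB' : ∀ z : S, (D (D V)) * ((D B) * z) = (D B) * ((D (D V)) * z) := by
    intro z; rw [← mul_assoc, cddVdB, mul_assoc]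
  have cdddVdB : (D (D (D V))) * (D B) = (D B) * (D (D (D V))) := heR _ _ hpdB
  have cdddVdB' : ∀ z : S, (D (D (D V))) * ((D B) * z) = (D B) * ((D (D (D V))) * z) := by
    intro z; rw [← mul_assoc, cdddVdB, mul_assoc]
  have cVddB : (V) * (D (D B)) = (D (D B)) * (V) := heL _ _ hVeven
  have cVddB' : ∀ z : S, (V) * ((D (D B)) * z) = (D (D B)) * ((V) * z) := by
    intro z; rw [← mul_assoc, cVddB, mul_assoc]
  have cdVddB : (D V) * (D (D B)) = -((D (D B)) * (D V)) := hoo _ _ hpdV hpddB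
  have cdVddB' : ∀ z : S, (D V) * ((D (D B)) * z) = -((D (D B)) * ((D V) * z)) := by
    intro z; rw [← mul_assoc, cdVddB, neg_mul, mul_assoc]
  have cddVddB : (D (D V)) * (D (D B)) = (D (D B)) * (D (D V)) := heL _ _ hpddV
  have cddVddB' : ∀ z : S, (D (D V)) * ((D (D B)) * z) = (D (D B)) * ((D (D V)) * z) := by
    intro z; rw [← mul_assoc, cddVddB, mul_assoc]
  have cdddVddB : (D (D (D V))) * (D (D B)) = -((D (D B)) * (D (D (D V)))) := hoo _ _ hpdddV hpddB
  have cdddVddB' : ∀ z : S, (D (D (D V))) * ((D (D B)) * z) = -((D (D B)) * ((D (D (D V))) * z)) := by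
    intro z; rw [← mul_assoc, cdddVddB, neg_mul, mul_assoc]
  have cdVV : (D V) * (V) = (V) * (D V) := heR _ _ hVeven
  have cdVV' : ∀ z : S, (D V) * ((V) * z) = (V) * ((D V) * z) := by
    intro z; rw [← mul_assoc, cdVV, mul_assoc]
  have cddVV : (D (D V)) * (V) = (V) * (D (D V)) := heR _ _ hVeven
  have cddVV' : ∀ z : S, (D (D V)) * ((V) * z) = (V) * ((D (D V)) * z) := by
    intro z; rw [← mul_assoc, cddVV, mul_assoc]
  have cdddVV : (D (D (D V))) * (V) = (V) * (D (D (D V))) := heR _ _ hVeven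
  have cdddVV' : ∀ z : S, (D (D (D V))) * ((V) * z) = (V) * ((D (D (D V))) * z) := by
    intro z; rw [← mul_assoc, cdddVV, mul_assoc]
  have cddVdV : (D (D V)) * (D V) = (D V) * (D (D V)) := heL _ _ hpddV
  have cddVdV' : ∀ z : S, (D (D V)) * ((D V) * z) = (D V) * ((D (D V)) * z) := by
    intro z; rw [← mul_assoc, cddVdV, mul_assoc]
  have cdddVdV : (D (D (D V))) * (D V) = -((D V) * (D (D (D V)))) := hoo _ _ hpdddV hpdV
  have cdddVdV' : ∀ z : S, (D (D (D V))) * ((D V) * z) = -((D V) * ((D (D (D V))) * z)) := by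
    intro z; rw [← mul_assoc, cdddVdV, neg_mul, mul_assoc]
  have cdddVddV : (D (D (D V))) * (D (D V)) = (D (D V)) * (D (D (D V))) := heR _ _ hpddV
  have cdddVddV' : ∀ z : S, (D (D (D V))) * ((D (D V)) * z) = (D (D V)) * ((D (D (D V))) * z) := by
    intro z; rw [← mul_assoc, cdddVddV, mul_assoc]
  have zB : (B) * (B) = 0 := by
    have h := hoo _ _ hBodd hBodd
    have h2 : (2:ℚ) • ((B) * (B)) = 0 := by rw [two_smul]; nth_rewrite 1 [h]; exact neg_add_cancel _
    calc (B) * (B) = (1/2:ℚ) • ((2:ℚ) • ((B) * (B))) := by rw [smul_smul]; norm_num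
      _ = 0 := by rw [h2, smul_zero]
  have zB' : ∀ z : S, (B) * ((B) * z) = 0 := by
    intro z; rw [← mul_assoc, zB, zero_mul]
  have zddB : (D (D B)) * (D (D B)) = 0 := by
    have h := hoo _ _ hpddB hpddB
    have h2 : (2:ℚ) • ((D (D B)) * (D (D B))) = 0 := by rw [two_smul]; nth_rewrite 1 [h]; exact neg_add_cancel _
    calc (D (D B)) * (D (D B)) = (1/2:ℚ) • ((2:ℚ) • ((D (D B)) * (D (D B)))) := by rw [smul_smul]; norm_num
      _ = 0 := by rw [h2, smul_zero]
  have zddB' : ∀ z : S, (D (D B)) * ((D (D B)) * z) = 0 := by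
    intro z; rw [← mul_assoc, zddB, zero_mul]
  have zdV : (D V) * (D V) = 0 := by
    have h := hoo _ _ hpdV hpdV
    have h2 : (2:ℚ) • ((D V) * (D V)) = 0 := by rw [two_smul]; nth_rewrite 1 [h]; exact neg_add_cancel _
    calc (D V) * (D V) = (1/2:ℚ) • ((2:ℚ) • ((D V) * (D V))) := by rw [smul_smul]; norm_num
      _ = 0 := by rw [h2, smul_zero]
  have zdV' : ∀ z : S, (D V) * ((D V) * z) = 0 := by
    intro z; rw [← mul_assoc, zdV, zero_mul]
  have zdddV : (D (D (D V))) * (D (D (D V))) = 0 := by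
    have h := hoo _ _ hpdddV hpdddV
    have h2 : (2:ℚ) • ((D (D (D V))) * (D (D (D V)))) = 0 := by rw [two_smul]; nth_rewrite 1 [h]; exact neg_add_cancel _
    calc (D (D (D V))) * (D (D (D V))) = (1/2:ℚ) • ((2:ℚ) • ((D (D (D V))) * (D (D (D V))))) := by rw [smul_smul]; norm_num
      _ = 0 := by rw [h2, smul_zero]
  have zdddV' : ∀ z : S, (D (D (D V))) * ((D (D (D V))) * z) = 0 := by
    intro z; rw [← mul_assoc, zdddV, zero_mul]
  have hDsub : ∀ x y : S, D (x - y) = D x - D y := by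
    intro x y; rw [sub_eq_add_neg, hDadd, hDneg, sub_eq_add_neg]
  have hD2 : ∀ x : S, D ((2:S) * x) = (2:S) * D x := by
    intro x
    have h : (2:S) * x = ((2:ℚ)) • x := by rw [Algebra.smul_def, map_ofNat]
    have h2 : (2:S) * D x = ((2:ℚ)) • D x := by rw [Algebra.smul_def, map_ofNat]
    rw [h, h2, hDsmul]
  have hD3 : ∀ x : S, D ((3:S) * x) = (3:S) * D x := by
    intro x
    have h : (3:S) * x = ((3:ℚ)) • x := by rw [Algebra.smul_def, map_ofNat]
    have h2 : (3:S) * D x = ((3:ℚ)) • D x := by rw [Algebra.smul_def, map_ofNat]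
    rw [h, h2, hDsmul]
  have hD4 : ∀ x : S, D ((4:S) * x) = (4:S) * D x := by
    intro x
    have h : (4:S) * x = ((4:ℚ)) • x := by rw [Algebra.smul_def, map_ofNat]
    have h2 : (4:S) * D x = ((4:ℚ)) • D x := by rw [Algebra.smul_def, map_ofNat]
    rw [h, h2, hDsmul]
  have hs2 : ∀ x : S, (2:S) * x = (2:ℚ) • x := by intro x; rw [Algebra.smul_def, map_ofNat]
  have hs3 : ∀ x : S, (3:S) * x = (3:ℚ) • x := by intro x; rw [Algebra.smul_def, map_ofNat]
  have hs4 : ∀ x : S, (4:S) * x = (4:ℚ) • x := by intro x; rw [Algebra.smul_def, map_ofNat]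
  subst hn3 hn2 hn1 hR
  simp only [hDsub, hD2, hD3, hD4, hDadd, hDLeib, hDneg, map_sub, map_add, map_neg, map_mul, map_ofNat,
    hσD, hBodd, hVeven, hpdB, hpdV, hpddB, hpddV, hpdddV, neg_neg]
  simp only [hs2, hs3, hs4, smul_mul_assoc, mul_smul_comm, smul_smul,
    mul_add, add_mul, mul_sub, sub_mul, mul_neg, neg_mul, smul_add, smul_sub, smul_neg,
    neg_neg, mul_assoc]
  simp only [cdBB, cdBB', cddBB, cddBB', cVB, cVB', cdVB, cdVB', cddVB, cddVB', cdddVB, cdddVB', cddBdB, cddBdB', cVdB, cVdB', cdVdB, cdVdB', cddVdB, cddVdB', cdddVdB, cdddVdB', cVddB, cVddB', cdVddB, cdVddB', cddVddB, cddVddB', cdddVddB, cdddVddB', cdVV, cdVV', cddVV, cddVV', cdddVV, cdddVV', cddVdV, cddVdV', cdddVdV, cdddVdV', cdddVddV, cdddVddV', zB, zB', zddB, zddB', zdV, zdV', zdddV, zdddV',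
    mul_neg, neg_mul, neg_neg, mul_zero, zero_mul, smul_zero, smul_neg,
    add_zero, zero_add, sub_zero, zero_sub, neg_zero]
  module
end

section
/- The super Bol operator for n = 1 equals D³ + R: if B is an odd superfield, ∇_{(p)} = D - pB, and R = ∂B - B(DB), then ∇_{(1)}∇_{(0)}∇_{(-1)} = (D - B)·D·(D + B) = D³ + R as operators on superfields, i.e. for every superfield C, (D-B)(D((D+B)C)) = D³C + R·C. -/
/-- The super Bol operator for n = 1:
(D - B)·D·(D + B) = D³ + R with R = ∂B - B(DB), B an odd superfield, acting on an
even superfield C.  Here S is a ring of superfields with parity involution σ,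
D is an odd graded derivation (D(xy) = (Dx)y + σ(x)(Dy)), and ∂ = D². -/
theorem superBol_n_one {S : Type*} [Ring S]
    (D : S → S) (σ : S →+* S) (B C : S)
    (hDadd : ∀ x y, D (x + y) = D x + D y)
    (hDLeib : ∀ x y, D (x * y) = D x * y + σ x * D y)
    (hσD : ∀ x, σ (D x) = -D (σ x))
    (hσσ : ∀ x, σ (σ x) = x)
    (hBodd : σ B = -B) (hB2 : B * B = 0) (hCeven : σ C = C) :
    D (D (D C + B * C)) - B * D (D C + B * C)
      = D (D (D C)) + (D (D B) - B * D B) * C := by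
  simp only [hDadd, hDLeib, hBodd, hσD, hσσ, hCeven]
  noncomm_ring
  simp [hBodd, hB2, ← mul_assoc]
end
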